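/- arXiv:1804.00204 — 10 statements merged into one kernel-verified Lean document; each statement's English description precedes it below -/
import Mathlib

section
/- If T is a nonnegative tensor in R^{n×⋯×n} (d indices, partially symmetric in the last d−1 indices) and u > 0 is a positive vector with T(u) = ρ u^{∘(d−1)} for some ρ ≥ 0 (where T(u)_i = Σ_{i2,…,id} t_{i,i2,…,id} u_{i2}⋯u_{id}), then for every s > 1 one has T^{∘s}(u^{∘s}) ≤ ρ^s (u^{∘s})^{∘(d−1)} componentwise, where T^{∘s} denotes the entrywise s-th power. -/
lemma sum_rpow_le_rpow_sum {α : Type*} (A : Finset α) (f : α → ℝ)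
    (hf : ∀ a ∈ A, 0 ≤ f a) {s : ℝ} (hs : 1 ≤ s) :
    ∑ a ∈ A, f a ^ s ≤ (∑ a ∈ A, f a) ^ s := by
  set S := ∑ a ∈ A, f a with hS
  have hS0 : 0 ≤ S := Finset.sum_nonneg hf
  have h1 : ∑ a ∈ A, f a ^ s ≤ ∑ a ∈ A, f a * S ^ (s - 1) := by
    refine Finset.sum_le_sum fun a ha => ?_
    have hfa := hf a ha
    have hle : f a ≤ S := Finset.single_le_sum hf ha
    calc f a ^ s = f a ^ (1 + (s - 1)) := by ring_nf
      _ = f a * f a ^ (s - 1) := by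
          rw [Real.rpow_add' hfa (by linarith), Real.rpow_one]
      _ ≤ f a * S ^ (s - 1) := by
          exact mul_le_mul_of_nonneg_left
            (Real.rpow_le_rpow hfa hle (by linarith)) hfa
  calc ∑ a ∈ A, f a ^ s ≤ ∑ a ∈ A, f a * S ^ (s - 1) := h1
    _ = S * S ^ (s - 1) := by rw [← Finset.sum_mul]
    _ = S ^ (1 + (s - 1)) := by
        rw [Real.rpow_add' hS0 (by linarith), Real.rpow_one]
    _ = S ^ s := by ring_nf

/-- If `T` is a nonnegative tensor in `ℝ^{n×⋯×n}` (d indices, partially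
symmetric in the last `d-1` indices) and `u > 0` satisfies `T(u) = ρ u^{∘(d-1)}` with
`ρ ≥ 0`, then for every `s > 1` one has `T^{∘s}(u^{∘s}) ≤ ρ^s (u^{∘s})^{∘(d-1)}`
componentwise. -/
theorem power_ineq_of_eigenvector
    (n d : ℕ) (hd : 2 ≤ d)
    (T : Fin n → (Fin (d - 1) → Fin n) → ℝ)
    (hT : ∀ i m, 0 ≤ T i m)
    (hsym : ∀ (i : Fin n) (σ : Equiv.Perm (Fin (d - 1))) (m : Fin (d - 1) → Fin n),
      T i (m ∘ σ) = T i m)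
    (u : Fin n → ℝ) (hu : ∀ i, 0 < u i)
    (ρ : ℝ) (hρ : 0 ≤ ρ)
    (heig : ∀ i, ∑ m : Fin (d - 1) → Fin n, T i m * ∏ k, u (m k) = ρ * u i ^ (d - 1))
    (s : ℝ) (hs : 1 < s) :
    ∀ i, ∑ m : Fin (d - 1) → Fin n, (T i m) ^ s * ∏ k, (u (m k)) ^ s
      ≤ ρ ^ s * (u i ^ s) ^ (d - 1) := by
  intro i
  have key : ∑ m : Fin (d - 1) → Fin n, (T i m) ^ s * ∏ k, (u (m k)) ^ s
      = ∑ m : Fin (d - 1) → Fin n, (T i m * ∏ k, u (m k)) ^ s := by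
    refine Finset.sum_congr rfl fun m _ => ?_
    rw [Real.mul_rpow (hT i m) (Finset.prod_nonneg fun k _ => (hu _).le),
      ← Real.finset_prod_rpow _ _ (fun k _ => (hu (m k)).le)]
  rw [key]
  have h2 := sum_rpow_le_rpow_sum Finset.univ
    (fun m : Fin (d - 1) → Fin n => T i m * ∏ k, u (m k))
    (fun m _ => mul_nonneg (hT i m) (Finset.prod_nonneg fun k _ => (hu _).le)) hs.le
  refine h2.trans_eq ?_
  rw [heig i, Real.mul_rpow hρ (pow_nonneg (hu i).le _)]
  congr 1
  rw [← Real.rpow_natCast (u i) (d - 1), ← Real.rpow_natCast (u i ^ s) (d - 1),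
    ← Real.rpow_mul (hu i).le, ← Real.rpow_mul (hu i).le, mul_comm]
end

section
/- Let F, G ∈ R_+^{n×⋯×n} be nonnegative tensors with d indices, and let u, v > 0 be positive vectors with F(u) = ρ_F u^{∘(d−1)} and G(v) = ρ_G v^{∘(d−1)} for scalars ρ_F, ρ_G ≥ 0. Let α, β > 0 with α + β = 1 and set x = u^{∘α} ∘ v^{∘β} (componentwise product of powers). Then componentwise (F^{∘α} ∘ G^{∘β})(x) ≤ ρ_F^α ρ_G^β x^{∘(d−1)}, where F^{∘α} ∘ G^{∘β} denotes the tensor with entries f_{i1,…,id}^α g_{i1,…,id}^β. -/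
/-!
Write `a_m = F_{i,m} ∏ₖ u_{m k}` and `b_m = G_{i,m} ∏ₖ v_{m k}`. Since `x = u^α v^β`, the
`m`-th term of the left-hand side is exactly `a_m^α b_m^β`, and Hölder's inequality with the
conjugate exponents `1/α`, `1/β` bounds `∑ a_m^α b_m^β` by `(∑ a_m)^α (∑ b_m)^β`. The eigenvector
equations evaluate the two sums to `ρ_F u_i^(d-1)` and `ρ_G v_i^(d-1)`.
-/

open Finset

namespace Real

variable {ι : Type*} {α β : ℝ}

theorem sum_rpow_mul_rpow_le (s : Finset ι) {f g : ι → ℝ} (hf : ∀ i ∈ s, 0 ≤ f i)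
    (hg : ∀ i ∈ s, 0 ≤ g i) (hα : 0 < α) (hβ : 0 < β) (hαβ : α + β = 1) :
    ∑ i ∈ s, f i ^ α * g i ^ β ≤ (∑ i ∈ s, f i) ^ α * (∑ i ∈ s, g i) ^ β := by
  have key := inner_le_Lp_mul_Lq_of_nonneg s (HolderConjugate.inv_inv hα hβ hαβ)
    (fun i hi => rpow_nonneg (hf i hi) α) (fun i hi => rpow_nonneg (hg i hi) β)
  rwa [sum_congr rfl fun i hi => rpow_rpow_inv (hf i hi) hα.ne',
    sum_congr rfl fun i hi => rpow_rpow_inv (hg i hi) hβ.ne', one_div, one_div,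
    inv_inv, inv_inv] at key

theorem rpow_mul_rpow_mul_mul {a b c e : ℝ} (ha : 0 ≤ a) (hb : 0 ≤ b) (hc : 0 ≤ c)
    (he : 0 ≤ e) : (a * c) ^ α * (b * e) ^ β = a ^ α * b ^ β * (c ^ α * e ^ β) := by
  rw [mul_rpow ha hc, mul_rpow hb he]
  ring

theorem prod_rpow_mul_rpow (s : Finset ι) {f g : ι → ℝ} (hf : ∀ i ∈ s, 0 ≤ f i)
    (hg : ∀ i ∈ s, 0 ≤ g i) :
    ∏ i ∈ s, f i ^ α * g i ^ β = (∏ i ∈ s, f i) ^ α * (∏ i ∈ s, g i) ^ β := by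
  rw [prod_mul_distrib, finsetProd_rpow s f hf, finsetProd_rpow s g hg]

end Real

theorem holder_tensor_ineq_general
    (n d : ℕ)
    (F G : Fin n → (Fin (d - 1) → Fin n) → ℝ)
    (hF : ∀ i m, 0 ≤ F i m) (hG : ∀ i m, 0 ≤ G i m)
    (u v : Fin n → ℝ) (hu : ∀ i, 0 < u i) (hv : ∀ i, 0 < v i)
    (ρF ρG : ℝ) (hρF : 0 ≤ ρF) (hρG : 0 ≤ ρG)
    (heigF : ∀ i, ∑ m : Fin (d - 1) → Fin n, F i m * ∏ k, u (m k) = ρF * u i ^ (d - 1))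
    (heigG : ∀ i, ∑ m : Fin (d - 1) → Fin n, G i m * ∏ k, v (m k) = ρG * v i ^ (d - 1))
    (α β : ℝ) (hα : 0 < α) (hβ : 0 < β) (hαβ : α + β = 1)
    (x : Fin n → ℝ) (hx : ∀ i, x i = u i ^ α * v i ^ β) :
    ∀ i, ∑ m : Fin (d - 1) → Fin n, (F i m) ^ α * (G i m) ^ β * ∏ k, x (m k)
      ≤ ρF ^ α * ρG ^ β * x i ^ (d - 1) := by
  intro i
  have hprod (m : Fin (d - 1) → Fin n) :
      ∏ k, x (m k) = (∏ k, u (m k)) ^ α * (∏ k, v (m k)) ^ β := by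
    simp only [hx]
    exact Real.prod_rpow_mul_rpow _ (fun k _ => (hu _).le) (fun k _ => (hv _).le)
  have hterm (m : Fin (d - 1) → Fin n) :
      F i m ^ α * G i m ^ β * ∏ k, x (m k)
        = (F i m * ∏ k, u (m k)) ^ α * (G i m * ∏ k, v (m k)) ^ β := by
    rw [hprod, Real.rpow_mul_rpow_mul_mul (hF i m) (hG i m)
      (prod_nonneg fun k _ => (hu _).le) (prod_nonneg fun k _ => (hv _).le)]
  calc ∑ m, F i m ^ α * G i m ^ β * ∏ k, x (m k)
      = ∑ m, (F i m * ∏ k, u (m k)) ^ α * (G i m * ∏ k, v (m k)) ^ β :=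
        sum_congr rfl fun m _ => hterm m
    _ ≤ (ρF * u i ^ (d - 1)) ^ α * (ρG * v i ^ (d - 1)) ^ β := by
        rw [← heigF, ← heigG]
        exact Real.sum_rpow_mul_rpow_le _
          (fun m _ => mul_nonneg (hF i m) (prod_nonneg fun k _ => (hu _).le))
          (fun m _ => mul_nonneg (hG i m) (prod_nonneg fun k _ => (hv _).le)) hα hβ hαβ
    _ = ρF ^ α * ρG ^ β * x i ^ (d - 1) := by
        rw [Real.rpow_mul_rpow_mul_mul hρF hρG (pow_nonneg (hu i).le _)
          (pow_nonneg (hv i).le _), hx, mul_pow, Real.rpow_pow_comm (hu i).le,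
          Real.rpow_pow_comm (hv i).le]

/-- Hölder/Kingman-type componentwise inequality for nonnegative tensors:
if `F(u) = ρ_F u^{∘(d-1)}`, `G(v) = ρ_G v^{∘(d-1)}` with `u,v > 0`, and `α+β=1`,
`α,β>0`, then `(F^{∘α}∘G^{∘β})(x) ≤ ρ_F^α ρ_G^β x^{∘(d-1)}` where `x = u^{∘α}∘v^{∘β}`. -/
theorem holder_tensor_ineq
    (n d : ℕ) (hd : 2 ≤ d)
    (F G : Fin n → (Fin (d - 1) → Fin n) → ℝ)
    (hF : ∀ i m, 0 ≤ F i m) (hG : ∀ i m, 0 ≤ G i m)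
    (u v : Fin n → ℝ) (hu : ∀ i, 0 < u i) (hv : ∀ i, 0 < v i)
    (ρF ρG : ℝ) (hρF : 0 ≤ ρF) (hρG : 0 ≤ ρG)
    (heigF : ∀ i, ∑ m : Fin (d - 1) → Fin n, F i m * ∏ k, u (m k) = ρF * u i ^ (d - 1))
    (heigG : ∀ i, ∑ m : Fin (d - 1) → Fin n, G i m * ∏ k, v (m k) = ρG * v i ^ (d - 1))
    (α β : ℝ) (hα : 0 < α) (hβ : 0 < β) (hαβ : α + β = 1)
    (x : Fin n → ℝ) (hx : ∀ i, x i = u i ^ α * v i ^ β) :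
    ∀ i, ∑ m : Fin (d - 1) → Fin n, (F i m) ^ α * (G i m) ^ β * ∏ k, x (m k)
      ≤ ρF ^ α * ρG ^ β * x i ^ (d - 1) :=
  holder_tensor_ineq_general n d F G hF hG u v hu hv ρF ρG hρF hρG heigF heigG α β hα hβ hαβ x hx
end

section
/- Let A ∈ R_+^{n×n} with positive right eigenvector u and positive left eigenvector w for eigenvalue ρ > 0 with wᵀu = 1, and define the occupation measure μ_{ij} = ρ^{-1} w_i a_{ij} u_j. Then Σ_{i,j : a_{ij}>0} μ_{ij} log( a_{ij} (Σ_k μ_{ik}) / μ_{ij} ) = log ρ. -/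
/-! On the support of `A`, the argument of the logarithm is `ρ u_i / u_j`, so each summand is
`μ_{ij} (log ρ + log u_i - log u_j)`. The occupation measure has total mass `wᵀu = 1` and equal row
and column marginals `w_i u_i`, so the potential differences `log u_i - log u_j` integrate to zero
against it and only `log ρ` survives. -/

open Finset Real

lemma sum_sum_mul_sub_eq_zero_of_marginals_eq {ι R : Type*} [Fintype ι] [CommRing R]
    (μ : ι → ι → R) (f : ι → R) (hμ : ∀ i, ∑ j, μ i j = ∑ j, μ j i) :
    ∑ i, ∑ j, μ i j * (f i - f j) = 0 := by
  have hrow : ∑ i, ∑ j, μ i j * f i = ∑ i, (∑ j, μ j i) * f i := by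
    simp only [← sum_mul, hμ]
  have hcol : ∑ i, ∑ j, μ i j * f j = ∑ i, (∑ j, μ j i) * f i := by
    rw [sum_comm]
    simp only [← sum_mul]
  simp only [mul_sub, sum_sub_distrib, hrow, hcol, sub_self]

section Occupation

variable {ι K : Type*} [Fintype ι] [Field K]

def occupationMeasure (A : Matrix ι ι K) (u w : ι → K) (ρ : K) (i j : ι) : K :=
  ρ⁻¹ * w i * A i j * u j

variable {A : Matrix ι ι K} {u w : ι → K} {ρ : K}

lemma occupationMeasure_sum_right (hρ : ρ ≠ 0) (hAu : ∀ i, ∑ j, A i j * u j = ρ * u i) (i : ι) :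
    ∑ j, occupationMeasure A u w ρ i j = w i * u i := by
  calc ∑ j, occupationMeasure A u w ρ i j = ρ⁻¹ * w i * ∑ j, A i j * u j := by
        rw [mul_sum]
        exact sum_congr rfl fun j _ => by unfold occupationMeasure; ring
    _ = w i * u i := by rw [hAu i]; field_simp

lemma occupationMeasure_sum_left (hρ : ρ ≠ 0) (hAw : ∀ j, ∑ i, A i j * w i = ρ * w j) (j : ι) :
    ∑ i, occupationMeasure A u w ρ i j = w j * u j := by
  calc ∑ i, occupationMeasure A u w ρ i j = ρ⁻¹ * u j * ∑ i, A i j * w i := by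
        rw [mul_sum]
        exact sum_congr rfl fun i _ => by unfold occupationMeasure; ring
    _ = w j * u j := by rw [hAw j]; field_simp

end Occupation

lemma occupationMeasure_mul_log_eq {ι : Type*} {A : Matrix ι ι ℝ} {u w : ι → ℝ} {ρ : ℝ}
    (hu : ∀ i, 0 < u i) (hw : ∀ i, 0 < w i) (hρ : 0 < ρ) {i j : ι} (hAij : 0 < A i j) :
    occupationMeasure A u w ρ i j * log (A i j * (w i * u i) / occupationMeasure A u w ρ i j)
      = occupationMeasure A u w ρ i j * (log ρ + (log (u i) - log (u j))) := by
  have hratio : A i j * (w i * u i) / occupationMeasure A u w ρ i j = ρ * u i / u j := by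
    have := (hw i).ne'; have := (hu j).ne'; have := hAij.ne'
    unfold occupationMeasure
    field_simp
  rw [hratio, log_div (mul_pos hρ (hu i)).ne' (hu j).ne', log_mul hρ.ne' (hu i).ne', add_sub_assoc]

/-- With `A u = ρ u`, `Aᵀ w = ρ w`, `wᵀ u = 1`, `u,w > 0`, `ρ > 0` and the
occupation measure `μ_{ij} = ρ⁻¹ w_i a_{ij} u_j`, one has
`Σ_{i,j : a_{ij} > 0} μ_{ij} log(a_{ij} (Σ_k μ_{ik}) / μ_{ij}) = log ρ`. -/
theorem entropy_sum_eq_log_spectral_radius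
    (n : ℕ) (A : Matrix (Fin n) (Fin n) ℝ) (hA : ∀ i j, 0 ≤ A i j)
    (u w : Fin n → ℝ) (hu : ∀ i, 0 < u i) (hw : ∀ i, 0 < w i)
    (ρ : ℝ) (hρ : 0 < ρ)
    (hAu : ∀ i, ∑ j, A i j * u j = ρ * u i)
    (hAw : ∀ j, ∑ i, A i j * w i = ρ * w j)
    (hwu : ∑ i, w i * u i = 1)
    (μ : Fin n → Fin n → ℝ) (hμ : ∀ i j, μ i j = ρ⁻¹ * w i * A i j * u j) :
    ∑ i, ∑ j, (if 0 < A i j then μ i j * Real.log (A i j * (∑ k, μ i k) / μ i j) else 0)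
      = Real.log ρ := by
  obtain rfl : μ = occupationMeasure A u w ρ := funext₂ hμ
  have hrow := occupationMeasure_sum_right (w := w) hρ.ne' hAu
  have hcol := occupationMeasure_sum_left (u := u) hρ.ne' hAw
  have hterm : ∀ i j, (if 0 < A i j then occupationMeasure A u w ρ i j *
        log (A i j * (∑ k, occupationMeasure A u w ρ i k) / occupationMeasure A u w ρ i j) else 0)
      = occupationMeasure A u w ρ i j * (log ρ + (log (u i) - log (u j))) := by
    intro i j
    split_ifs with hAij
    · rw [hrow, occupationMeasure_mul_log_eq hu hw hρ hAij]
    · simp [occupationMeasure, le_antisymm (not_lt.mp hAij) (hA i j)]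
  have hbalanced : ∀ i, ∑ j, occupationMeasure A u w ρ i j = ∑ j, occupationMeasure A u w ρ j i :=
    fun i => by rw [hrow, hcol]
  simp only [hterm]
  calc ∑ i, ∑ j, occupationMeasure A u w ρ i j * (log ρ + (log (u i) - log (u j)))
      = (∑ i, ∑ j, occupationMeasure A u w ρ i j) * log ρ
        + ∑ i, ∑ j, occupationMeasure A u w ρ i j * (log (u i) - log (u j)) := by
        simp only [mul_add, sum_add_distrib, sum_mul]
    _ = log ρ := by
        rw [sum_sum_mul_sub_eq_zero_of_marginals_eq _ _ hbalanced]
        simp only [hrow, hwu, one_mul, add_zero]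
end

section
/- For each directed cycle γ of length k on vertices of [n] (distinct vertices i_1,…,i_k, with edges (i_j, i_{j+1}) for j ∈ [k], indices mod k), the matrix μ(γ) assigning weight 1/k to each edge of γ and 0 elsewhere is an occupation measure, and it is an extreme point of the convex set Ω(n) of occupation measures. Conversely, every extreme point of Ω(n) is of this form. -/
open Classical

/-- The set `Ω(n)` of occupation measures. -/
def Omega (n : ℕ) : Set (Matrix (Fin n) (Fin n) ℝ) :=
  {μ | (∀ i j, 0 ≤ μ i j) ∧ (∑ i, ∑ j, μ i j = 1) ∧ ∀ i, ∑ j, μ i j = ∑ j, μ j i}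

/-- The occupation measure `μ(γ)` of a directed cycle `γ` with (distinct) vertices
`f 0, …, f k`: each edge of the cycle gets weight `1/(k+1)`. -/
noncomputable def cycleMeasure (n k : ℕ) (f : Fin (k + 1) → Fin n) :
    Matrix (Fin n) (Fin n) ℝ :=
  Matrix.of fun a b =>
    if ∃ j : Fin (k + 1), f j = a ∧ f (j + 1) = b then (1 : ℝ) / (k + 1) else 0

/-!
A matrix supported on the edges of an injective cycle `γ` is balanced iff it has the same weight
on consecutive edges, so the only such point of `Ω(n)` is `μ(γ)`. Since a point of an open segment
of nonnegative matrices bounds their supports, `μ(γ)` is extreme. Conversely, for `μ ∈ Ω(n)`, the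
vertices of positive out-flow each have a positive edge to another such vertex (by balance), so
following these edges closes a cycle `γ` in the support of `μ`. Then `μ ± t (μ - μ(γ)) ∈ Ω(n)` for
small `t > 0`, and an extreme `μ` must equal `μ(γ)`.
-/

open Function Finset

theorem Fin.apply_eq_apply_zero_of_apply_add_one {β : Type*} {k : ℕ} {c : Fin (k + 1) → β}
    (h : ∀ j, c (j + 1) = c j) (j : Fin (k + 1)) : c j = c 0 := by
  induction j using Fin.induction with
  | zero => rfl
  | succ i ih => rw [← Fin.coeSucc_eq_succ, h, ih]

theorem Matrix.eq_zero_of_mem_openSegment {α : Type*} {x y z : Matrix α α ℝ}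
    (hx : ∀ a b, 0 ≤ x a b) (hy : ∀ a b, 0 ≤ y a b) (hz : z ∈ openSegment ℝ x y) (a b : α)
    (hab : z a b = 0) : x a b = 0 := by
  obtain ⟨s, t, hs, ht, -, rfl⟩ := hz
  have hsum : s * x a b + t * y a b = 0 := hab
  have hsx := ((add_eq_zero_iff_of_nonneg (mul_nonneg hs.le (hx a b))
    (mul_nonneg ht.le (hy a b))).1 hsum).1
  exact (mul_eq_zero.1 hsx).resolve_left hs.ne'

theorem Function.periodicPts_nonempty {α : Type*} [Finite α] [Nonempty α] (g : α → α) :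
    (periodicPts g).Nonempty := by
  let x : α := Classical.arbitrary α
  obtain ⟨m, l, heq, hlt⟩ : ∃ m l, g^[m] x = g^[l] x ∧ m < l := by
    obtain ⟨m, l, heq, hne⟩ :=
      not_injective_iff.1 (not_injective_infinite_finite fun m => g^[m] x)
    rcases hne.lt_or_gt with h | h
    exacts [⟨m, l, heq, h⟩, ⟨l, m, heq.symm, h⟩]
  refine ⟨g^[m] x, mk_mem_periodicPts (Nat.sub_pos_of_lt hlt) ?_⟩
  rw [IsPeriodicPt, IsFixedPt, ← iterate_add_apply, Nat.sub_add_cancel hlt.le, heq]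

theorem exists_injective_cycle_of_forall_exists {α : Type*} [Finite α] [Nonempty α]
    {r : α → α → Prop} (h : ∀ a, ∃ b, r a b) :
    ∃ (k : ℕ) (f : Fin (k + 1) → α), Injective f ∧ ∀ j, r (f j) (f (j + 1)) := by
  choose g hg using h
  obtain ⟨x, hx⟩ := periodicPts_nonempty g
  obtain ⟨k, hk⟩ := Nat.exists_eq_add_one_of_ne_zero (minimalPeriod_pos_of_mem_periodicPts hx).ne'
  have hlt (j : Fin (k + 1)) : (j : ℕ) ∈ Set.Iio (minimalPeriod g x) := by
    rw [Set.mem_Iio, hk]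
    exact j.isLt
  refine ⟨k, fun j => g^[j] x, fun i j hij => Fin.ext ?_, fun j => ?_⟩
  · exact iterate_injOn_Iio_minimalPeriod (hlt i) (hlt j) hij
  · have hsucc : g^[((j + 1 : Fin (k + 1)) : ℕ)] x = g (g^[j] x) := by
      rw [← iterate_succ_apply' g, ← iterate_mod_minimalPeriod_eq (n := (j : ℕ).succ), hk]
      simp [Fin.val_add]
    simpa only [hsucc] using hg _

def IsSupportedOnCycle {α : Type*} {k : ℕ} (f : Fin (k + 1) → α) (x : Matrix α α ℝ) : Prop :=
  ∀ a b, x a b ≠ 0 → ∃ j, f j = a ∧ f (j + 1) = b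

namespace IsSupportedOnCycle

section

variable {α : Type*} {k : ℕ} {f : Fin (k + 1) → α} {x y : Matrix α α ℝ}

theorem mono (hy : IsSupportedOnCycle f y) (hxy : ∀ a b, y a b = 0 → x a b = 0) :
    IsSupportedOnCycle f x :=
  fun a b hab => hy a b fun h => hab (hxy a b h)

variable [Fintype α] (hf : Injective f) (hx : IsSupportedOnCycle f x)
include hf hx

theorem sum_row (j : Fin (k + 1)) : ∑ b, x (f j) b = x (f j) (f (j + 1)) := by
  refine Fintype.sum_eq_single _ fun b hb => ?_
  by_contra hne
  obtain ⟨i, hi, rfl⟩ := hx _ _ hne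
  exact hb (by rw [hf hi])

theorem sum_col (j : Fin (k + 1)) : ∑ a, x a (f (j + 1)) = x (f j) (f (j + 1)) := by
  refine Fintype.sum_eq_single _ fun a ha => ?_
  by_contra hne
  obtain ⟨i, rfl, hi⟩ := hx _ _ hne
  exact ha (by rw [add_right_cancel (hf hi)])

theorem sum_sum_eq_sum_cycle : ∑ a, ∑ b, x a b = ∑ j, x (f j) (f (j + 1)) := by
  rw [← Fintype.sum_prod_type' fun a b => x a b]
  refine (Fintype.sum_of_injective (fun j => (f j, f (j + 1))) ?_ _ _ ?_ fun j => rfl).symm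
  · exact fun i j hij => hf (Prod.ext_iff.1 hij).1
  · rintro ⟨a, b⟩ hab
    by_contra hne
    obtain ⟨j, rfl, rfl⟩ := hx a b hne
    exact hab ⟨j, rfl⟩

theorem balanced_iff :
    (∀ a, ∑ b, x a b = ∑ b, x b a) ↔
      ∀ j, x (f (j + 1)) (f (j + 1 + 1)) = x (f j) (f (j + 1)) := by
  refine ⟨fun h j => by simpa only [hx.sum_row hf, hx.sum_col hf] using h (f (j + 1)), ?_⟩
  intro h a
  by_cases ha : a ∈ Set.range f
  · obtain ⟨j, rfl⟩ := ha
    rw [← sub_add_cancel j 1, hx.sum_row hf, hx.sum_col hf, h]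
  · have hrow : ∀ b, x a b = 0 := fun b => by
      by_contra hne
      obtain ⟨j, rfl, -⟩ := hx a b hne
      exact ha ⟨j, rfl⟩
    have hcol : ∀ b, x b a = 0 := fun b => by
      by_contra hne
      obtain ⟨j, -, rfl⟩ := hx b a hne
      exact ha ⟨j + 1, rfl⟩
    simp only [hrow, hcol]

end

section

variable {n k : ℕ} {f : Fin (k + 1) → Fin n} {x : Matrix (Fin n) (Fin n) ℝ}
  (hf : Injective f) (hx : IsSupportedOnCycle f x)
include hf hx

theorem mem_Omega_iff : x ∈ Omega n ↔ ∀ j, x (f j) (f (j + 1)) = 1 / (k + 1) := by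
  constructor
  · rintro ⟨-, hsum, hbal⟩ j
    have hconst := Fin.apply_eq_apply_zero_of_apply_add_one
      (c := fun j => x (f j) (f (j + 1))) ((hx.balanced_iff hf).1 hbal)
    have h0 : ((k : ℝ) + 1) * x (f 0) (f (0 + 1)) = 1 := by
      simpa [hx.sum_sum_eq_sum_cycle hf, hconst] using hsum
    rw [hconst j]
    field_simp
    linarith
  · intro h
    refine ⟨fun a b => ?_, ?_, (hx.balanced_iff hf).2 fun j => by rw [h, h]⟩
    · by_cases hab : x a b = 0
      · exact hab.ge
      · obtain ⟨j, rfl, rfl⟩ := hx a b hab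
        rw [h j]
        positivity
    · rw [hx.sum_sum_eq_sum_cycle hf]
      simp only [h, sum_const, card_univ, Fintype.card_fin, nsmul_eq_mul]
      field_simp
      push_cast
      ring

theorem eq_cycleMeasure (hmem : x ∈ Omega n) : x = cycleMeasure n k f := by
  have hedge := (hx.mem_Omega_iff hf).1 hmem
  ext a b
  simp only [cycleMeasure, Matrix.of_apply]
  split_ifs with hab
  · obtain ⟨j, rfl, rfl⟩ := hab
    exact hedge j
  · by_contra hne
    exact hab (hx a b hne)

end

end IsSupportedOnCycle

theorem isSupportedOnCycle_cycleMeasure {n k : ℕ} (f : Fin (k + 1) → Fin n) :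
    IsSupportedOnCycle f (cycleMeasure n k f) := by
  intro a b hab
  by_contra hne
  exact hab (by simp only [cycleMeasure, Matrix.of_apply, if_neg hne])

theorem cycleMeasure_mem_Omega {n k : ℕ} {f : Fin (k + 1) → Fin n} (hf : Injective f) :
    cycleMeasure n k f ∈ Omega n :=
  ((isSupportedOnCycle_cycleMeasure f).mem_Omega_iff hf).2 fun j => if_pos ⟨j, rfl, rfl⟩

theorem cycleMeasure_mem_extremePoints {n k : ℕ} {f : Fin (k + 1) → Fin n} (hf : Injective f) :
    cycleMeasure n k f ∈ Set.extremePoints ℝ (Omega n) :=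
  mem_extremePoints_iff_left.2 ⟨cycleMeasure_mem_Omega hf, fun _ hx _ hy hseg =>
    ((isSupportedOnCycle_cycleMeasure f).mono
      (Matrix.eq_zero_of_mem_openSegment hx.1 hy.1 hseg)).eq_cycleMeasure hf hx⟩

theorem smul_add_smul_mem_Omega {n : ℕ} {μ ν : Matrix (Fin n) (Fin n) ℝ} (hμ : μ ∈ Omega n)
    (hν : ν ∈ Omega n) {s t : ℝ} (hst : s + t = 1) (hnonneg : ∀ a b, 0 ≤ s * μ a b + t * ν a b) :
    s • μ + t • ν ∈ Omega n := by
  obtain ⟨-, hμsum, hμbal⟩ := hμ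
  obtain ⟨-, hνsum, hνbal⟩ := hν
  refine ⟨hnonneg, ?_, fun a => ?_⟩
  · simp only [Matrix.add_apply, Matrix.smul_apply, smul_eq_mul, sum_add_distrib, ← mul_sum,
      hμsum, hνsum, mul_one, hst]
  · simp only [Matrix.add_apply, Matrix.smul_apply, smul_eq_mul, sum_add_distrib, ← mul_sum,
      hμbal a, hνbal a]

open Topology in
theorem eq_of_mem_extremePoints_of_support_subset {n : ℕ} {μ ν : Matrix (Fin n) (Fin n) ℝ}
    (hμ : μ ∈ Set.extremePoints ℝ (Omega n)) (hν : ν ∈ Omega n)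
    (hsupp : ∀ a b, μ a b = 0 → ν a b = 0) : ν = μ := by
  have hsmall : ∀ᶠ t in 𝓝[>] (0 : ℝ), (∀ a b, t * ν a b ≤ μ a b) ∧ t < 1 := by
    refine (Filter.eventually_all.2 fun a => Filter.eventually_all.2 fun b => ?_).and
      (nhdsWithin_le_nhds (gt_mem_nhds one_pos))
    rcases (hμ.1.1 a b).eq_or_lt with h | h
    · simp [hsupp a b h.symm, ← h]
    · have hlim : Filter.Tendsto (fun t : ℝ => t * ν a b) (𝓝 0) (𝓝 0) := by
        simpa using (continuous_mul_const (ν a b)).tendsto 0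
      exact nhdsWithin_le_nhds ((hlim.eventually (gt_mem_nhds h)).mono fun t ht => ht.le)
  obtain ⟨t, ⟨hle, ht1⟩, ht0⟩ := (hsmall.and self_mem_nhdsWithin).exists
  have hx : (1 + t) • μ + (-t) • ν ∈ Omega n :=
    smul_add_smul_mem_Omega hμ.1 hν (by ring) fun a b => by
      nlinarith [hle a b, hμ.1.1 a b]
  have hy : (1 - t) • μ + t • ν ∈ Omega n :=
    smul_add_smul_mem_Omega hμ.1 hν (by ring) fun a b => by
      nlinarith [hμ.1.1 a b, hν.1 a b]
  have hseg : μ ∈ openSegment ℝ ((1 - t) • μ + t • ν) ((1 + t) • μ + (-t) • ν) :=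
    ⟨1 / 2, 1 / 2, by norm_num, by norm_num, by norm_num, by module⟩
  have hμy := hμ.2 hy hx hseg
  refine smul_right_injective _ ht0.ne' ?_
  calc t • ν = ((1 - t) • μ + t • ν) - (1 - t) • μ := by module
    _ = t • μ := by rw [hμy]; module

theorem exists_cycle_of_mem_Omega {n : ℕ} {μ : Matrix (Fin n) (Fin n) ℝ} (hμ : μ ∈ Omega n) :
    ∃ (k : ℕ) (f : Fin (k + 1) → Fin n), Injective f ∧ ∀ j, 0 < μ (f j) (f (j + 1)) := by
  obtain ⟨hpos, hsum, hbal⟩ := hμ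
  have hS : Nonempty {a : Fin n // 0 < ∑ b, μ a b} := by
    obtain ⟨a, -, ha⟩ := exists_lt_of_sum_lt (s := univ) (f := fun _ => 0)
      (g := fun a => ∑ b, μ a b) (by rw [sum_const_zero, hsum]; exact one_pos)
    exact ⟨⟨a, ha⟩⟩
  -- a positive edge `a → b` gives `b` positive in-flow, hence positive out-flow
  have hstep : ∀ a : {a : Fin n // 0 < ∑ b, μ a b},
      ∃ b : {a : Fin n // 0 < ∑ b, μ a b}, 0 < μ a b := by
    rintro ⟨a, ha⟩
    obtain ⟨b, -, hb⟩ := exists_lt_of_sum_lt (s := univ) (f := fun _ => 0) (g := μ a)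
      (by rwa [sum_const_zero])
    refine ⟨⟨b, ?_⟩, hb⟩
    rw [hbal b]
    exact hb.trans_le (single_le_sum (fun c _ => hpos c b) (mem_univ a))
  obtain ⟨k, f, hf, hedge⟩ := exists_injective_cycle_of_forall_exists hstep
  exact ⟨k, Subtype.val ∘ f, Subtype.val_injective.comp hf, hedge⟩

/-- For every directed cycle `γ` (distinct vertices), `μ(γ)` is an
occupation measure and an extreme point of `Ω(n)`; conversely, every extreme point of
`Ω(n)` is of this form. -/
theorem extreme_points_of_occupation_measures (n : ℕ) :
    (∀ (k : ℕ) (f : Fin (k + 1) → Fin n), Function.Injective f →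
      cycleMeasure n k f ∈ Omega n ∧
      cycleMeasure n k f ∈ Set.extremePoints ℝ (Omega n)) ∧
    (∀ μ ∈ Set.extremePoints ℝ (Omega n),
      ∃ (k : ℕ) (f : Fin (k + 1) → Fin n), Function.Injective f ∧
        μ = cycleMeasure n k f) := by
  refine ⟨fun k f hf => ⟨cycleMeasure_mem_Omega hf, cycleMeasure_mem_extremePoints hf⟩,
    fun μ hμ => ?_⟩
  obtain ⟨k, f, hf, hedge⟩ := exists_cycle_of_mem_Omega hμ.1
  refine ⟨k, f, hf, (eq_of_mem_extremePoints_of_support_subset hμ (cycleMeasure_mem_Omega hf)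
    fun a b hab => ?_).symm⟩
  by_contra hne
  obtain ⟨j, rfl, rfl⟩ := isSupportedOnCycle_cycleMeasure f a b hne
  exact (hedge j).ne' hab
end

section
/- Let T ∈ R_{ps,+}^{n×⋯×n} be a weakly irreducible nonnegative partially symmetric tensor with positive eigenvector u > 0, T(u) = ρ(T) u^{∘(d−1)}, and let w > 0 be the left eigenvector of the matrix A = diag(u)^{-(d−2)} D T(u) with Aᵀ w = (d−1) ρ(T) w and wᵀ u = 1. Define μ_{i1,…,id} = ρ(T)^{-1} w_{i1} u_{i1}^{-(d−2)} t_{i1,…,id} u_{i2}⋯u_{id}. Then μ is a tensor occupation measure: Σ μ_{i1,…,id} = 1 and for each j, Σ_{i2,…,id} μ_{j,i2,…,id} = (d−1)^{-1} Σ over all positions of occurrences of j among indices 2,…,d of μ, i.e., (d−1) Σ_{i2,…,id} μ_{j,i2,…,id} = Σ_{k=2}^d Σ_{i1,…,id: i_k = j} μ_{i1,…,id}. -/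
/-- For a nonnegative partially symmetric tensor `T` with positive
eigenvector `u` (`T(u) = ρ u^{∘(d-1)}`, `ρ > 0`) and `w > 0` the positive left
eigenvector of `A = diag(u)^{-(d-2)} DT(u)` with `Aᵀ w = (d-1) ρ w`, `wᵀ u = 1`, the
tensor `μ_{i₁,…,i_d} = ρ⁻¹ w_{i₁} u_{i₁}^{-(d-2)} t_{i₁,…,i_d} u_{i₂}⋯u_{i_d}` is a
tensor occupation measure: it sums to `1` and satisfies the flow condition
`(d-1) Σ_m μ_{j,m} = Σ_{i₁,m} μ_{i₁,m} · #{k : m_k = j}`. -/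
theorem tensor_occupation_measure_of_eigenvectors
    (n d : ℕ) (hd : 2 ≤ d)
    (T : Fin n → (Fin (d - 1) → Fin n) → ℝ)
    (hT : ∀ i m, 0 ≤ T i m)
    (hsym : ∀ (i : Fin n) (σ : Equiv.Perm (Fin (d - 1))) (m : Fin (d - 1) → Fin n),
      T i (m ∘ σ) = T i m)
    (u : Fin n → ℝ) (hu : ∀ i, 0 < u i)
    (ρ : ℝ) (hρ : 0 < ρ)
    (heig : ∀ i, ∑ m : Fin (d - 1) → Fin n, T i m * ∏ k, u (m k) = ρ * u i ^ (d - 1))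
    (A : Fin n → Fin n → ℝ)
    (hA : ∀ i j, A i j = (u i ^ (d - 2))⁻¹ * ((d - 1 : ℕ) : ℝ) *
      ∑ m : Fin (d - 1) → Fin n,
        if m ⟨0, by omega⟩ = j then
          T i m * ∏ k ∈ Finset.univ.erase (⟨0, by omega⟩ : Fin (d - 1)), u (m k)
        else 0)
    (w : Fin n → ℝ) (hw : ∀ i, 0 < w i)
    (hAw : ∀ j, ∑ i, A i j * w i = ((d - 1 : ℕ) : ℝ) * ρ * w j)
    (hwu : ∑ i, w i * u i = 1)
    (μ : Fin n → (Fin (d - 1) → Fin n) → ℝ)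
    (hμ : ∀ i m, μ i m = ρ⁻¹ * w i * (u i ^ (d - 2))⁻¹ * T i m * ∏ k, u (m k)) :
    (∑ i, ∑ m : Fin (d - 1) → Fin n, μ i m = 1) ∧
    ∀ a : Fin n, ((d - 1 : ℕ) : ℝ) * ∑ m : Fin (d - 1) → Fin n, μ a m =
      ∑ i, ∑ m : Fin (d - 1) → Fin n,
        μ i m * ((Finset.univ.filter (fun k => m k = a)).card : ℝ) := by
  have hd1 : d - 2 + 1 = d - 1 := by omega
  have hρ' : (ρ : ℝ) ≠ 0 := ne_of_gt hρ
  have hup : ∀ i, (u i ^ (d - 2)) ≠ 0 := fun i => pow_ne_zero _ (ne_of_gt (hu i))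
  have hdm : ((d - 1 : ℕ) : ℝ) ≠ 0 := by
    have h1 : 1 ≤ d - 1 := by omega
    positivity
  have hupow : ∀ i, u i ^ (d - 1) = u i ^ (d - 2) * u i := by
    intro i; rw [← hd1, pow_succ]
  have hsum' : ∀ i, ∑ m : Fin (d - 1) → Fin n, μ i m = w i * u i := by
    intro i
    have h1 : ∑ m : Fin (d - 1) → Fin n, μ i m
        = ρ⁻¹ * w i * (u i ^ (d - 2))⁻¹ * ∑ m : Fin (d - 1) → Fin n, T i m * ∏ k, u (m k) := by
      rw [Finset.mul_sum]
      exact Finset.sum_congr rfl fun m _ => by rw [hμ]; ring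
    rw [h1, heig i, hupow i]
    have h2 : ρ⁻¹ * w i * (u i ^ (d - 2))⁻¹ * (ρ * (u i ^ (d - 2) * u i))
        = (ρ⁻¹ * ρ) * ((u i ^ (d - 2))⁻¹ * u i ^ (d - 2)) * (w i * u i) := by ring
    rw [h2, inv_mul_cancel₀ hρ', inv_mul_cancel₀ (hup i), one_mul, one_mul]
  refine ⟨by simp only [hsum']; exact hwu, ?_⟩
  intro a
  set z : Fin (d - 1) := ⟨0, by omega⟩ with hzdef
  have key : ∀ (i : Fin n) (k : Fin (d - 1)),
      (∑ m : Fin (d - 1) → Fin n, if m k = a then T i m * ∏ j, u (m j) else 0)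
      = ∑ m : Fin (d - 1) → Fin n, if m z = a then T i m * ∏ j, u (m j) else 0 := by
    intro i k
    refine Fintype.sum_equiv (Equiv.arrowCongr (Equiv.swap z k) (Equiv.refl (Fin n))) _ _ ?_
    intro m
    have h0 : (Equiv.arrowCongr (Equiv.swap z k) (Equiv.refl (Fin n))) m
        = m ∘ (Equiv.swap z k) := by
      funext j; simp [Equiv.arrowCongr]
    have h1 : ((Equiv.arrowCongr (Equiv.swap z k) (Equiv.refl (Fin n))) m) z = m k := by
      rw [h0]; simp
    have h2 : T i ((Equiv.arrowCongr (Equiv.swap z k) (Equiv.refl (Fin n))) m) = T i m := by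
      rw [h0]; exact hsym i _ m
    have h3 : (∏ j, u (((Equiv.arrowCongr (Equiv.swap z k) (Equiv.refl (Fin n))) m) j))
        = ∏ j, u (m j) := by
      rw [h0]
      simp only [Function.comp_apply]
      exact Equiv.prod_comp (Equiv.swap z k) (fun j => u (m j))
    rw [h1, h2, h3]
  have hE : ∀ i : Fin n,
      (∑ m : Fin (d - 1) → Fin n, if m z = a then T i m * ∏ j, u (m j) else 0)
      = u a * (u i ^ (d - 2) * A i a / ((d - 1 : ℕ) : ℝ)) := by
    intro i
    set E : ℝ := ∑ m : Fin (d - 1) → Fin n,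
        if m z = a then T i m * ∏ k ∈ Finset.univ.erase z, u (m k) else 0 with hEdef
    have step : (∑ m : Fin (d - 1) → Fin n, if m z = a then T i m * ∏ j, u (m j) else 0)
        = u a * E := by
      rw [hEdef, Finset.mul_sum]
      refine Finset.sum_congr rfl fun m _ => ?_
      by_cases h : m z = a
      · simp only [h, if_true]
        rw [← Finset.mul_prod_erase Finset.univ (fun j => u (m j)) (Finset.mem_univ z), h]
        ring
      · simp [h]
    rw [step, hA i a, ← hEdef]
    have h2 : u i ^ (d - 2) * ((u i ^ (d - 2))⁻¹ * ((d - 1 : ℕ) : ℝ) * E) / ((d - 1 : ℕ) : ℝ)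
        = (u i ^ (d - 2) * (u i ^ (d - 2))⁻¹) * (((d - 1 : ℕ) : ℝ) / ((d - 1 : ℕ) : ℝ)) * E := by
      ring
    rw [h2, mul_inv_cancel₀ (hup i), div_self hdm, one_mul, one_mul]
  have per_i : ∀ i : Fin n, ∑ m : Fin (d - 1) → Fin n,
      μ i m * ((Finset.univ.filter (fun k => m k = a)).card : ℝ)
      = ρ⁻¹ * (u a * (A i a * w i)) := by
    intro i
    have e1 : ∀ m : Fin (d - 1) → Fin n,
        μ i m * ((Finset.univ.filter (fun k => m k = a)).card : ℝ)
        = ∑ k : Fin (d - 1), (if m k = a then μ i m else 0) := by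
      intro m
      have hcard : ((Finset.univ.filter (fun k => m k = a)).card : ℝ)
          = ∑ k : Fin (d - 1), (if m k = a then (1 : ℝ) else 0) := by
        rw [Finset.card_filter]
        push_cast
        rfl
      rw [hcard, Finset.mul_sum]
      exact Finset.sum_congr rfl fun k _ => by by_cases h : m k = a <;> simp [h]
    rw [Finset.sum_congr rfl (fun m _ => e1 m), Finset.sum_comm]
    have e2 : ∀ k : Fin (d - 1),
        (∑ m : Fin (d - 1) → Fin n, if m k = a then μ i m else 0)
        = ρ⁻¹ * w i * (u i ^ (d - 2))⁻¹ *
            (u a * (u i ^ (d - 2) * A i a / ((d - 1 : ℕ) : ℝ))) := by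
      intro k
      have h1 : (∑ m : Fin (d - 1) → Fin n, if m k = a then μ i m else 0)
          = ρ⁻¹ * w i * (u i ^ (d - 2))⁻¹ *
            ∑ m : Fin (d - 1) → Fin n, if m k = a then T i m * ∏ j, u (m j) else 0 := by
        rw [Finset.mul_sum]
        refine Finset.sum_congr rfl fun m _ => ?_
        by_cases h : m k = a
        · simp only [h, if_true]; rw [hμ]; ring
        · simp [h]
      rw [h1, key i k, hE i]
    rw [Finset.sum_congr rfl (fun k _ => e2 k), Finset.sum_const, Finset.card_univ,
      Fintype.card_fin, nsmul_eq_mul]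
    have h3 : ((d - 1 : ℕ) : ℝ) * (ρ⁻¹ * w i * (u i ^ (d - 2))⁻¹ *
          (u a * (u i ^ (d - 2) * A i a / ((d - 1 : ℕ) : ℝ))))
        = (((d - 1 : ℕ) : ℝ) / ((d - 1 : ℕ) : ℝ)) * ((u i ^ (d - 2))⁻¹ * u i ^ (d - 2)) *
            (ρ⁻¹ * (u a * (A i a * w i))) := by ring
    rw [h3, div_self hdm, inv_mul_cancel₀ (hup i), one_mul, one_mul]
  rw [Finset.sum_congr rfl (fun i _ => per_i i), ← Finset.mul_sum, ← Finset.mul_sum, hAw a,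
    hsum' a]
  have h4 : ρ⁻¹ * (u a * (((d - 1 : ℕ) : ℝ) * ρ * w a))
      = (ρ⁻¹ * ρ) * (((d - 1 : ℕ) : ℝ) * (w a * u a)) := by ring
  rw [h4, inv_mul_cancel₀ hρ', one_mul]
end

section
/- Let T = [t_{i1,…,id}] be a nonnegative tensor and suppose v ≩ 0 is a tropical eigenvector with tropical eigenvalue λ: max over i2,…,id of t_{i,i2,…,id} v_{i2}⋯v_{id} equals λ v_i^{d−1} for all i ∈ [n]. Then for every x > 0 componentwise, λ ≤ max_{i∈[n]} ( max_{i2,…,id} t_{i,i2,…,id} x_{i2}⋯x_{id} ) / x_i^{d−1}. -/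
/-- If `v ≩ 0` is a tropical (max-times) eigenvector of the nonnegative
tensor `T` with eigenvalue `λ ≥ 0`, then for every positive vector `x`,
`λ ≤ max_i (max_m t_{i,m} x_{m₂}⋯x_{m_d}) / x_i^{d-1}`
(Collatz–Wielandt upper bound, easy direction). -/
theorem tropical_collatz_wielandt_upper
    (n d : ℕ) (hd : 2 ≤ d)
    (T : Fin n → (Fin (d - 1) → Fin n) → ℝ)
    (hT : ∀ i m, 0 ≤ T i m)
    (v : Fin n → ℝ) (hv : ∀ i, 0 ≤ v i) (hv0 : v ≠ 0)
    (lam : ℝ) (hlam : 0 ≤ lam)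
    (heig : ∀ i, (⨆ m : Fin (d - 1) → Fin n, T i m * ∏ k, v (m k)) =
      lam * v i ^ (d - 1)) :
    ∀ x : Fin n → ℝ, (∀ i, 0 < x i) →
      lam ≤ ⨆ i, (⨆ m : Fin (d - 1) → Fin n, T i m * ∏ k, x (m k)) / x i ^ (d - 1) := by
  intro x hx
  obtain ⟨j, hj⟩ : ∃ j, 0 < v j := by
    by_contra h
    push_neg at h
    exact hv0 (funext fun i => le_antisymm (h i) (hv i))
  haveI hn : Nonempty (Fin n) := ⟨j⟩
  obtain ⟨i₀, hi₀⟩ := Finite.exists_max (fun i : Fin n => v i / x i)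
  set c := v i₀ / x i₀ with hc
  have hcpos : 0 < c := lt_of_lt_of_le (div_pos hj (hx j)) (hi₀ j)
  have hvle : ∀ i, v i ≤ c * x i := fun i => by
    have := (div_le_div_iff₀ (hx i) (hx i₀)).mp (hi₀ i)
    rw [hc, div_mul_eq_mul_div, le_div_iff₀ (hx i₀)]
    linarith
  set S := ⨆ m : Fin (d - 1) → Fin n, T i₀ m * ∏ k, x (m k) with hS
  have hbS : BddAbove (Set.range fun m : Fin (d - 1) → Fin n => T i₀ m * ∏ k, x (m k)) :=
    Finite.bddAbove_range _
  have hmain : lam * v i₀ ^ (d - 1) ≤ c ^ (d - 1) * S := by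
    rw [← heig i₀]
    refine ciSup_le fun m => ?_
    have h1 : (∏ k, v (m k)) ≤ ∏ k : Fin (d - 1), c * x (m k) :=
      Finset.prod_le_prod (fun k _ => hv _) (fun k _ => hvle _)
    have h2 : (∏ k : Fin (d - 1), c * x (m k)) = c ^ (d - 1) * ∏ k, x (m k) := by
      rw [Finset.prod_mul_distrib, Finset.prod_const]
      simp
    have h3 : T i₀ m * ∏ k, v (m k) ≤ c ^ (d - 1) * (T i₀ m * ∏ k, x (m k)) := by
      calc T i₀ m * ∏ k, v (m k) ≤ T i₀ m * (c ^ (d - 1) * ∏ k, x (m k)) := by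
            rw [← h2]; exact mul_le_mul_of_nonneg_left h1 (hT i₀ m)
        _ = c ^ (d - 1) * (T i₀ m * ∏ k, x (m k)) := by ring
    refine h3.trans (mul_le_mul_of_nonneg_left ?_ (by positivity))
    exact le_ciSup hbS m
  have hvi₀ : v i₀ = c * x i₀ := (div_mul_cancel₀ (v i₀) (hx i₀).ne').symm
  have hkey : lam * x i₀ ^ (d - 1) ≤ S := by
    have := hmain
    rw [hvi₀, mul_pow] at this
    have hcp : 0 < c ^ (d - 1) := by positivity
    nlinarith [this, hcp]
  have hstep : lam ≤ S / x i₀ ^ (d - 1) := by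
    rw [le_div_iff₀ (pow_pos (hx i₀) _)]
    linarith
  refine hstep.trans ?_
  exact le_ciSup (f := fun i => (⨆ m : Fin (d - 1) → Fin n, T i m * ∏ k, x (m k)) / x i ^ (d - 1)) (Finite.bddAbove_range _) i₀
end

section
/- Let T ∈ R_+^{n×⋯×n} be a nonnegative tensor (d indices) and suppose that for s ≥ 1 the entrywise power T^{∘s} has a nonnegative eigenvector: T^{∘s}(x) = ρ_s x^{∘(d−1)} for some probability vector x ≩ 0. Then for any fixed positive vector y > 0, (ρ_s)^{1/s} ≤ max_{i} ( T^{∘s}(y^{∘s})_i )^{1/s} / y_i^{d−1}, and consequently lim sup_{s→∞} ρ_s^{1/s} ≤ max_{i∈[n]} ( max_{i2,…,id} t_{i,i2,…,id} y_{i2}⋯y_{id} ) / y_i^{d−1}. -/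
open Filter Topology

/-- If for each `s ≥ 1` the entrywise power `T^{∘s}` has a nonnegative
eigenpair `(ρ_s, x_s)` with `x_s` a probability vector, then for every fixed `y > 0`
one has `ρ_s^{1/s} ≤ max_i (T^{∘s}(y^{∘s})_i)^{1/s} / y_i^{d-1}` and consequently
`limsup_{s→∞} ρ_s^{1/s} ≤ max_i (max_m t_{i,m} y_{m₂}⋯y_{m_d}) / y_i^{d-1}`. -/
theorem power_eigenvalue_limsup_bound
    (n d : ℕ) (hd : 2 ≤ d)
    (T : Fin n → (Fin (d - 1) → Fin n) → ℝ)
    (hT : ∀ i m, 0 ≤ T i m)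
    (ρ : ℝ → ℝ) (x : ℝ → Fin n → ℝ)
    (hρ : ∀ s, 1 ≤ s → 0 ≤ ρ s)
    (hx : ∀ s, 1 ≤ s → (∀ i, 0 ≤ x s i) ∧ x s ≠ 0 ∧ ∑ i, x s i = 1)
    (heig : ∀ s, 1 ≤ s → ∀ i,
      ∑ m : Fin (d - 1) → Fin n, (T i m) ^ s * ∏ k, x s (m k)
        = ρ s * (x s i) ^ (d - 1))
    (y : Fin n → ℝ) (hy : ∀ i, 0 < y i) :
    (∀ s, 1 ≤ s → (ρ s) ^ (1 / s) ≤
      ⨆ i, (∑ m : Fin (d - 1) → Fin n, (T i m) ^ s * ∏ k, (y (m k)) ^ s) ^ (1 / s)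
        / y i ^ (d - 1)) ∧
    limsup (fun s : ℝ => (ρ s) ^ (1 / s)) atTop ≤
      ⨆ i, (⨆ m : Fin (d - 1) → Fin n, T i m * ∏ k, y (m k)) / y i ^ (d - 1) := by
  -- n is positive
  have hn : 0 < n := by
    rcases Nat.eq_zero_or_pos n with h | h
    · exfalso
      subst h
      exact (hx 1 le_rfl).2.1 (funext fun i => i.elim0)
    · exact h
  haveI hNE : Nonempty (Fin n) := ⟨⟨0, hn⟩⟩
  -- abbreviations
  set S : ℝ → Fin n → ℝ :=
    fun s i => ∑ m : Fin (d - 1) → Fin n, (T i m) ^ s * ∏ k, (y (m k)) ^ s with hS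
  set A : Fin n → ℝ := fun i => ⨆ m : Fin (d - 1) → Fin n, T i m * ∏ k, y (m k) with hA
  set C : ℝ := ⨆ i, A i / y i ^ (d - 1) with hC
  set N : ℝ := (Fintype.card (Fin (d - 1) → Fin n) : ℝ) with hN
  have hN1 : (1 : ℝ) ≤ N := by
    rw [hN]
    exact_mod_cast Fintype.card_pos
  have hN0 : (0 : ℝ) < N := lt_of_lt_of_le one_pos hN1
  have ha0 : ∀ i m, 0 ≤ T i m * ∏ k, y (m k) := fun i m =>
    mul_nonneg (hT i m) (Finset.prod_nonneg fun k _ => (hy (m k)).le)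
  have hA0 : ∀ i, 0 ≤ A i := fun i => Real.iSup_nonneg (ha0 i)
  have hC0 : 0 ≤ C := Real.iSup_nonneg fun i => div_nonneg (hA0 i) (pow_nonneg (hy i).le _)
  have hS0 : ∀ s i, 0 ≤ S s i := fun s i =>
    Finset.sum_nonneg fun m _ =>
      mul_nonneg (Real.rpow_nonneg (hT i m) s)
        (Finset.prod_nonneg fun k _ => Real.rpow_nonneg (hy (m k)).le s)
  -- swap of powers
  have hswap : ∀ (b : ℝ), 0 < b → ∀ (s : ℝ) (k : ℕ), (b ^ s) ^ k = (b ^ (k : ℕ)) ^ s := by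
    intro b hb s k
    rw [← Real.rpow_natCast (b ^ s) k, ← Real.rpow_natCast b k,
      ← Real.rpow_mul hb.le, ← Real.rpow_mul hb.le, mul_comm]
  -- Part 1
  have part1 : ∀ s, 1 ≤ s → (ρ s) ^ (1 / s) ≤ ⨆ i, (S s i) ^ (1 / s) / y i ^ (d - 1) := by
    intro s hs
    have hs0 : (0 : ℝ) < s := lt_of_lt_of_le one_pos hs
    obtain ⟨hxnn, hxne, hxsum⟩ := hx s hs
    have hj : ∃ j, 0 < x s j := by
      by_contra h
      push_neg at h
      exact hxne (funext fun j => le_antisymm (h j) (hxnn j))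
    obtain ⟨j, hjpos⟩ := hj
    set z : Fin n → ℝ := fun i => y i ^ s with hz
    have hzpos : ∀ i, 0 < z i := fun i => Real.rpow_pos_of_pos (hy i) s
    obtain ⟨i0, hi0⟩ := Finite.exists_max (fun i => x s i / z i)
    set r : ℝ := x s i0 / z i0 with hr
    have hrpos : 0 < r := lt_of_lt_of_le (div_pos hjpos (hzpos j)) (hi0 j)
    have hxle : ∀ i, x s i ≤ r * z i := fun i =>
      (div_le_iff₀ (hzpos i)).mp (hi0 i)
    have hxi0 : x s i0 = r * z i0 := by
      rw [hr, div_mul_cancel₀ _ (hzpos i0).ne']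
    have key : ρ s * (x s i0) ^ (d - 1) ≤ r ^ (d - 1) * S s i0 := by
      rw [← heig s hs i0, hS]
      simp only []
      rw [Finset.mul_sum]
      refine Finset.sum_le_sum fun m _ => ?_
      have h1 : ∏ k, x s (m k) ≤ ∏ k : Fin (d - 1), (r * z (m k)) :=
        Finset.prod_le_prod (fun k _ => hxnn (m k)) (fun k _ => hxle (m k))
      have h2 : ∏ k : Fin (d - 1), (r * z (m k)) = r ^ (d - 1) * ∏ k, z (m k) := by
        rw [Finset.prod_mul_distrib, Finset.prod_const, Finset.card_univ, Fintype.card_fin]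
      calc T i0 m ^ s * ∏ k, x s (m k)
          ≤ T i0 m ^ s * (r ^ (d - 1) * ∏ k, z (m k)) := by
            refine mul_le_mul_of_nonneg_left ?_ (Real.rpow_nonneg (hT i0 m) s)
            rw [← h2]; exact h1
        _ = r ^ (d - 1) * (T i0 m ^ s * ∏ k, z (m k)) := by ring
    have hρle : ρ s ≤ S s i0 / (z i0) ^ (d - 1) := by
      rw [hxi0, mul_pow] at key
      rw [le_div_iff₀ (pow_pos (hzpos i0) _)]
      have hrp : (0 : ℝ) < r ^ (d - 1) := pow_pos hrpos _
      nlinarith [key, hrp]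
    have hstep : (ρ s) ^ (1 / s) ≤ (S s i0) ^ (1 / s) / y i0 ^ (d - 1) := by
      have h1 : (ρ s) ^ (1 / s) ≤ (S s i0 / (z i0) ^ (d - 1)) ^ (1 / s) :=
        Real.rpow_le_rpow (hρ s hs) hρle (by positivity)
      have h2 : (S s i0 / (z i0) ^ (d - 1)) ^ (1 / s)
          = (S s i0) ^ (1 / s) / ((z i0) ^ (d - 1)) ^ (1 / s) :=
        Real.div_rpow (hS0 s i0) (pow_nonneg (hzpos i0).le (d - 1)) (1 / s)
      have h3 : ((z i0) ^ (d - 1)) ^ (1 / s) = y i0 ^ (d - 1) := by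
        rw [hz]
        simp only []
        rw [hswap (y i0) (hy i0) s (d - 1), ← Real.rpow_mul (pow_nonneg (hy i0).le _),
          mul_one_div_cancel hs0.ne', Real.rpow_one]
      rw [h2, h3] at h1
      exact h1
    refine hstep.trans ?_
    exact le_ciSup (f := fun i => (S s i) ^ (1 / s) / y i ^ (d - 1))
      (Set.Finite.bddAbove (Set.finite_range _)) i0
  refine ⟨part1, ?_⟩
  -- uniform bound: sup_i S s i ^(1/s) / y i ^(d-1) ≤ N^(1/s) * C
  have hbnd : ∀ s, 1 ≤ s → (⨆ i, (S s i) ^ (1 / s) / y i ^ (d - 1)) ≤ N ^ (1 / s) * C := by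
    intro s hs
    have hs0 : (0 : ℝ) < s := lt_of_lt_of_le one_pos hs
    refine ciSup_le fun i => ?_
    have hSeq : S s i = ∑ m : Fin (d - 1) → Fin n, (T i m * ∏ k, y (m k)) ^ s := by
      rw [hS]
      refine Finset.sum_congr rfl fun m _ => ?_
      rw [Real.finset_prod_rpow _ _ (fun k _ => (hy (m k)).le),
        ← Real.mul_rpow (hT i m) (Finset.prod_nonneg fun k _ => (hy (m k)).le)]
    have hsum : S s i ≤ N * (A i) ^ s := by
      rw [hSeq]
      calc ∑ m : Fin (d - 1) → Fin n, (T i m * ∏ k, y (m k)) ^ s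
          ≤ ∑ _m : Fin (d - 1) → Fin n, (A i) ^ s := by
            refine Finset.sum_le_sum fun m _ => ?_
            exact Real.rpow_le_rpow (ha0 i m)
              (le_ciSup (f := fun m => T i m * ∏ k, y (m k))
                (Set.Finite.bddAbove (Set.finite_range _)) m) hs0.le
        _ = N * (A i) ^ s := by
            rw [Finset.sum_const, Finset.card_univ, nsmul_eq_mul, hN]
    have hSup : (S s i) ^ (1 / s) ≤ N ^ (1 / s) * A i := by
      calc (S s i) ^ (1 / s) ≤ (N * (A i) ^ s) ^ (1 / s) :=
            Real.rpow_le_rpow (hS0 s i) hsum (by positivity)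
        _ = N ^ (1 / s) * ((A i) ^ s) ^ (1 / s) :=
            Real.mul_rpow hN0.le (Real.rpow_nonneg (hA0 i) s)
        _ = N ^ (1 / s) * A i := by
            rw [← Real.rpow_mul (hA0 i), mul_one_div_cancel hs0.ne', Real.rpow_one]
    calc (S s i) ^ (1 / s) / y i ^ (d - 1) ≤ (N ^ (1 / s) * A i) / y i ^ (d - 1) := by
          gcongr <;> first | exact hSup | exact pow_nonneg (hy i).le _
      _ = N ^ (1 / s) * (A i / y i ^ (d - 1)) := by ring
      _ ≤ N ^ (1 / s) * C := by
          refine mul_le_mul_of_nonneg_left ?_ (Real.rpow_nonneg hN0.le _)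
          exact le_ciSup (f := fun i => A i / y i ^ (d - 1))
            (Set.Finite.bddAbove (Set.finite_range _)) i
  -- limsup
  have hev : ∀ᶠ s in atTop, (ρ s) ^ (1 / s) ≤ N ^ (1 / s) * C := by
    filter_upwards [eventually_ge_atTop (1 : ℝ)] with s hs
    exact (part1 s hs).trans (hbnd s hs)
  have hv : Tendsto (fun s : ℝ => N ^ (1 / s) * C) atTop (𝓝 C) := by
    have h1 : Tendsto (fun s : ℝ => 1 / s) atTop (𝓝 0) := by
      simpa [one_div] using tendsto_inv_atTop_zero
    have h2 : Tendsto (fun s : ℝ => N ^ (1 / s)) atTop (𝓝 1) := by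
      have := Filter.Tendsto.rpow (tendsto_const_nhds (x := N)) h1 (Or.inl hN0.ne')
      simpa using this
    simpa using h2.mul_const C
  have hcb : IsCoboundedUnder (· ≤ ·) atTop (fun s : ℝ => (ρ s) ^ (1 / s)) := by
    refine isCoboundedUnder_le_of_eventually_le atTop (x := 0) ?_
    filter_upwards [eventually_ge_atTop (1 : ℝ)] with s hs
    exact Real.rpow_nonneg (hρ s hs) _
  calc limsup (fun s : ℝ => (ρ s) ^ (1 / s)) atTop
      ≤ limsup (fun s : ℝ => N ^ (1 / s) * C) atTop :=
        limsup_le_limsup hev hcb hv.isBoundedUnder_le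
    _ = C := hv.limsup_eq
end

section
/- Let T ∈ C^{n×⋯×n} (d indices, d ≥ 2) with λ an eigenvalue for the homogeneous eigenproblem: T(x) = λ x^{∘(d−1)} with x ≠ 0, T(x)_i = Σ t_{i,i2,…,id} x_{i2}⋯x_{id}, and normalize x so that ‖x^{∘(d−1)}‖_2 = 1. Then |λ| ≤ ‖T‖_∞ · n^{(d−2)/2}, where ‖T‖_∞ is the spectral norm of T. -/
/-!
Pair `T` against `y = conj (x^{∘(d-1)})` and `z_k = x / ‖x‖₂` for every `k`. By the eigenvalue
equation the pairing equals `λ ‖x^{∘(d-1)}‖₂² / ‖x‖₂^{d-1} = λ / ‖x‖₂^{d-1}`, so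
`|λ| ≤ ‖T‖_∞ ‖x‖₂^{d-1}`, and the power mean inequality
`‖x‖₂^{d-1} ≤ n^{(d-2)/2} ‖x^{∘(d-1)}‖₂ = n^{(d-2)/2}` finishes.
-/

/-- The spectral norm of an equidimensional complex `d`-tensor `T`, where `T i m` has
first index `i` and remaining `d-1` indices `m`. -/
noncomputable def specNormC (n d : ℕ) (T : Fin n → (Fin (d - 1) → Fin n) → ℂ) : ℝ :=
  sSup {r | ∃ (y : Fin n → ℂ) (z : Fin (d - 1) → Fin n → ℂ),
    (∑ i, ‖y i‖ ^ 2 = 1) ∧ (∀ k, ∑ i, ‖z k i‖ ^ 2 = 1) ∧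
    r = ‖∑ i, ∑ m : Fin (d - 1) → Fin n,
          T i m * y i * ∏ k, z k (m k)‖}

open Finset

theorem norm_le_one_of_sum_sq_norm_eq_one {ι E : Type*} [Fintype ι] [SeminormedAddGroup E]
    {v : ι → E} (hv : ∑ i, ‖v i‖ ^ 2 = 1) (i : ι) : ‖v i‖ ≤ 1 := by
  have hi : ‖v i‖ ^ 2 ≤ 1 := hv ▸ single_le_sum (fun j _ => sq_nonneg ‖v j‖) (mem_univ i)
  exact (sq_le_one_iff₀ (norm_nonneg _)).mp hi

theorem sum_sq_norm_pos {ι E : Type*} [Fintype ι] [NormedAddGroup E] {x : ι → E} (hx : x ≠ 0) :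
    0 < ∑ i, ‖x i‖ ^ 2 := by
  obtain ⟨i₀, hi₀⟩ := Function.ne_iff.mp hx
  exact sum_pos' (fun i _ => sq_nonneg _) ⟨i₀, mem_univ _, by positivity⟩

theorem sum_sq_norm_inv_sqrt_mul_eq_one {ι : Type*} [Fintype ι] {x : ι → ℂ} (hx : x ≠ 0) :
    ∑ i, ‖((√(∑ j, ‖x j‖ ^ 2) : ℝ) : ℂ)⁻¹ * x i‖ ^ 2 = 1 := by
  have hpos := sum_sq_norm_pos hx
  simp_rw [norm_mul, norm_inv, Complex.norm_real, Real.norm_eq_abs, mul_pow, inv_pow, sq_abs,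
    Real.sq_sqrt hpos.le, ← mul_sum]
  exact inv_mul_cancel₀ hpos.ne'

section PowerMean

variable {ι 𝕜 : Type*} [Fintype ι] [NormedDivisionRing 𝕜]

theorem sqrt_sum_sq_norm_pow_le (x : ι → 𝕜) (k : ℕ) :
    √(∑ i, ‖x i‖ ^ 2) ^ (k + 1)
      ≤ (Fintype.card ι : ℝ) ^ ((k : ℝ) / 2) * √(∑ i, ‖x i ^ (k + 1)‖ ^ 2) := by
  have jensen := pow_sum_le_card_mul_sum_pow (s := univ) (f := fun i => ‖x i‖ ^ 2)
    (fun _ _ => sq_nonneg _) k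
  have card_sq : ((Fintype.card ι : ℝ) ^ ((k : ℝ) / 2)) ^ 2 = (Fintype.card ι : ℝ) ^ k := by
    rw [← Real.rpow_natCast _ 2, ← Real.rpow_mul (by positivity)]
    norm_num
  rw [← pow_le_pow_iff_left₀ (by positivity) (by positivity) two_ne_zero, mul_pow, card_sq,
    ← pow_mul, mul_comm (k + 1), pow_mul, Real.sq_sqrt (by positivity),
    Real.sq_sqrt (by positivity)]
  simpa [norm_pow, ← pow_mul, mul_comm] using jensen

end PowerMean

section TensorForm

variable {ι κ R : Type*} [Fintype ι] [Fintype κ] [DecidableEq κ]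

def tensorForm [CommSemiring R] (T : ι → (κ → ι) → R) (y : ι → R) (z : κ → ι → R) : R :=
  ∑ i, ∑ m : κ → ι, T i m * y i * ∏ k, z k (m k)

theorem tensorForm_const_mul [CommSemiring R] (T : ι → (κ → ι) → R) (y x : ι → R) (c : R) :
    tensorForm T y (fun _ i => c * x i)
      = c ^ Fintype.card κ * ∑ i, y i * ∑ m : κ → ι, T i m * ∏ k, x (m k) := by
  simp only [tensorForm, prod_mul_distrib, prod_const, card_univ, mul_sum]
  exact sum_congr rfl fun i _ => sum_congr rfl fun m _ => by ring

theorem norm_tensorForm_le [NormedField R] (T : ι → (κ → ι) → R) {y : ι → R} {z : κ → ι → R}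
    (hy : ∀ i, ‖y i‖ ≤ 1) (hz : ∀ k i, ‖z k i‖ ≤ 1) :
    ‖tensorForm T y z‖ ≤ ∑ i, ∑ m : κ → ι, ‖T i m‖ := by
  refine (norm_sum_le _ _).trans (sum_le_sum fun i _ => (norm_sum_le _ _).trans
    (sum_le_sum fun m _ => ?_))
  rw [norm_mul, norm_mul, norm_prod]
  have hprod : ∏ k, ‖z k (m k)‖ ≤ 1 := prod_le_one (fun _ _ => norm_nonneg _) fun k _ => hz k _
  calc ‖T i m‖ * ‖y i‖ * ∏ k, ‖z k (m k)‖ ≤ ‖T i m‖ * 1 * 1 := by gcongr; exact hy i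
    _ = ‖T i m‖ := by ring

end TensorForm

theorem norm_tensorForm_le_specNormC {n d : ℕ} (T : Fin n → (Fin (d - 1) → Fin n) → ℂ)
    {y : Fin n → ℂ} {z : Fin (d - 1) → Fin n → ℂ}
    (hy : ∑ i, ‖y i‖ ^ 2 = 1) (hz : ∀ k, ∑ i, ‖z k i‖ ^ 2 = 1) :
    ‖tensorForm T y z‖ ≤ specNormC n d T := by
  refine le_csSup ⟨∑ i, ∑ m : Fin (d - 1) → Fin n, ‖T i m‖, ?_⟩ ⟨y, z, hy, hz, rfl⟩
  rintro r ⟨y', z', hy', hz', rfl⟩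
  exact norm_tensorForm_le T (norm_le_one_of_sum_sq_norm_eq_one hy')
    fun k => norm_le_one_of_sum_sq_norm_eq_one (hz' k)

theorem tensorForm_conj_pow_of_eigen {n d : ℕ} {T : Fin n → (Fin (d - 1) → Fin n) → ℂ}
    {lam : ℂ} {x : Fin n → ℂ}
    (heig : ∀ i, ∑ m : Fin (d - 1) → Fin n, T i m * ∏ k, x (m k) = lam * x i ^ (d - 1))
    (c : ℂ) :
    tensorForm T (fun i => starRingEnd ℂ (x i ^ (d - 1))) (fun _ i => c * x i)
      = c ^ (d - 1) * lam * ((∑ i, ‖x i ^ (d - 1)‖ ^ 2 : ℝ) : ℂ) := by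
  simp_rw [tensorForm_const_mul, Fintype.card_fin, heig, Complex.ofReal_sum,
    Complex.ofReal_pow, ← Complex.conj_mul', mul_sum]
  exact sum_congr rfl fun _ _ => by ring

/-- If `T(x) = λ x^{∘(d-1)}` with `x ≠ 0` normalized so that
`‖x^{∘(d-1)}‖₂ = 1`, then `|λ| ≤ ‖T‖_∞ · n^{(d-2)/2}`. -/
theorem eigenvalue_le_spectral_norm
    (n d : ℕ) (hd : 2 ≤ d)
    (T : Fin n → (Fin (d - 1) → Fin n) → ℂ)
    (lam : ℂ) (x : Fin n → ℂ) (hx0 : x ≠ 0)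
    (heig : ∀ i, ∑ m : Fin (d - 1) → Fin n, T i m * ∏ k, x (m k)
      = lam * x i ^ (d - 1))
    (hnorm : ∑ i, ‖x i ^ (d - 1)‖ ^ 2 = 1) :
    ‖lam‖ ≤ specNormC n d T * (n : ℝ) ^ (((d : ℝ) - 2) / 2) := by
  set s := √(∑ i, ‖x i‖ ^ 2)
  have hs : 0 < s := Real.sqrt_pos.mpr (sum_sq_norm_pos hx0)
  have hspec : ‖lam‖ * s⁻¹ ^ (d - 1) ≤ specNormC n d T := by
    have h := norm_tensorForm_le_specNormC T (y := fun i => starRingEnd ℂ (x i ^ (d - 1)))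
      (by simpa using hnorm) fun _ => sum_sq_norm_inv_sqrt_mul_eq_one hx0
    rwa [tensorForm_conj_pow_of_eigen heig, hnorm, Complex.ofReal_one, mul_one, norm_mul,
      norm_pow, norm_inv, Complex.norm_real, Real.norm_of_nonneg hs.le, mul_comm] at h
  have hmean : s ^ (d - 1) ≤ (n : ℝ) ^ (((d : ℝ) - 2) / 2) := by
    have h := sqrt_sum_sq_norm_pow_le x (d - 2)
    rwa [show d - 2 + 1 = d - 1 by omega, hnorm, Real.sqrt_one, mul_one, Fintype.card_fin,
      Nat.cast_sub hd, Nat.cast_two] at h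
  calc ‖lam‖
      = ‖lam‖ * s⁻¹ ^ (d - 1) * s ^ (d - 1) := by
        rw [mul_assoc, ← mul_pow, inv_mul_cancel₀ hs.ne', one_pow, mul_one]
    _ ≤ specNormC n d T * (n : ℝ) ^ (((d : ℝ) - 2) / 2) := by
      gcongr
      exact (mul_nonneg (norm_nonneg _) (by positivity)).trans hspec
end

section
/- For nonnegative tensors F, G ∈ R_+^{m1×⋯×md} and α, β > 0 with α + β = 1, the spectral norm satisfies ‖F^{∘α} ∘ G^{∘β}‖_∞ ≤ ‖F‖_∞^α ‖G‖_∞^β, i.e., the spectral norm is log-convex in the entrywise logarithms. -/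
/-!
Expand `F^α G^β` against a rank-one tensor `x₁ ⊗ ⋯ ⊗ x_d` with nonnegative entries and write each
summand as `(F·X)^α (G·X)^β`, where `X` is the corresponding entry of the rank-one tensor.
Hölder's inequality with exponents `1/α, 1/β` bounds the sum by `(F × x)^α (G × x)^β`, and taking
the supremum over unit vectors gives `‖F‖_∞^α ‖G‖_∞^β`.
-/

/-- The multilinear form `T × (x₁ ⊗ ⋯ ⊗ x_d)` of a real `d`-tensor of shape `m`. -/
noncomputable def tform {d : ℕ} {m : Fin d → ℕ}
    (T : ((i : Fin d) → Fin (m i)) → ℝ) (x : (i : Fin d) → Fin (m i) → ℝ) : ℝ :=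
  ∑ idx : (i : Fin d) → Fin (m i), T idx * ∏ i, x i (idx i)

/-- Spectral norm of a nonnegative tensor. -/
noncomputable def specNorm {d : ℕ} {m : Fin d → ℕ}
    (T : ((i : Fin d) → Fin (m i)) → ℝ) : ℝ :=
  sSup {r | ∃ x : (i : Fin d) → Fin (m i) → ℝ,
    (∀ i j, 0 ≤ x i j) ∧ (∀ i, ∑ j, (x i j) ^ 2 = 1) ∧ r = tform T x}

open Finset Real

theorem Real.sum_rpow_mul_rpow_le_s14 {ι : Type*} (s : Finset ι) {f g : ι → ℝ}
    (hf : ∀ i ∈ s, 0 ≤ f i) (hg : ∀ i ∈ s, 0 ≤ g i)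
    {α β : ℝ} (hα : 0 < α) (hβ : 0 < β) (hαβ : α + β = 1) :
    ∑ i ∈ s, f i ^ α * g i ^ β ≤ (∑ i ∈ s, f i) ^ α * (∑ i ∈ s, g i) ^ β := by
  have hpq : HolderConjugate α⁻¹ β⁻¹ := by
    rw [holderConjugate_iff, inv_inv, inv_inv]
    exact ⟨one_lt_inv_iff₀.mpr ⟨hα, by linarith⟩, hαβ⟩
  have H := inner_le_Lp_mul_Lq_of_nonneg s hpq
    (fun i hi => rpow_nonneg (hf i hi) α) (fun i hi => rpow_nonneg (hg i hi) β)
  simpa only [sum_congr rfl fun i hi => rpow_rpow_inv (hf i hi) hα.ne',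
    sum_congr rfl fun i hi => rpow_rpow_inv (hg i hi) hβ.ne', one_div, inv_inv] using H

theorem Real.mul_rpow_mul_mul_rpow_mul {a b c α β : ℝ} (ha : 0 ≤ a) (hb : 0 ≤ b) (hc : 0 ≤ c)
    (hαβ : α + β = 1) :
    (a * c) ^ α * (b * c) ^ β = a ^ α * b ^ β * c := by
  rw [mul_rpow ha hc, mul_rpow hb hc]
  calc _ = a ^ α * b ^ β * (c ^ α * c ^ β) := by ring
    _ = _ := by rw [← rpow_add' hc (by simp [hαβ]), hαβ, rpow_one]

theorem le_one_of_sum_sq_eq_one {ι : Type*} [Fintype ι] {v : ι → ℝ}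
    (hv : ∑ j, v j ^ 2 = 1) (j : ι) : v j ≤ 1 :=
  ((sq_le_one_iff_abs_le_one _).mp
    (hv ▸ single_le_sum (fun _ _ => sq_nonneg _) (mem_univ j))).trans' (le_abs_self _)

section Tensor

variable {d : ℕ} {m : Fin d → ℕ}

theorem tform_nonneg {T : ((i : Fin d) → Fin (m i)) → ℝ} (hT : ∀ idx, 0 ≤ T idx)
    {x : (i : Fin d) → Fin (m i) → ℝ} (hx : ∀ i j, 0 ≤ x i j) :
    0 ≤ tform T x :=
  sum_nonneg fun idx _ => mul_nonneg (hT idx) (prod_nonneg fun i _ => hx i (idx i))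

theorem tform_rpow_mul_rpow_le {F G : ((i : Fin d) → Fin (m i)) → ℝ}
    (hF : ∀ idx, 0 ≤ F idx) (hG : ∀ idx, 0 ≤ G idx)
    {x : (i : Fin d) → Fin (m i) → ℝ} (hx : ∀ i j, 0 ≤ x i j)
    {α β : ℝ} (hα : 0 < α) (hβ : 0 < β) (hαβ : α + β = 1) :
    tform (fun idx => F idx ^ α * G idx ^ β) x ≤ tform F x ^ α * tform G x ^ β := by
  have hX : ∀ idx : (i : Fin d) → Fin (m i), 0 ≤ ∏ i, x i (idx i) :=
    fun idx => prod_nonneg fun i _ => hx i (idx i)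
  calc tform (fun idx => F idx ^ α * G idx ^ β) x
      = ∑ idx, (F idx * ∏ i, x i (idx i)) ^ α * (G idx * ∏ i, x i (idx i)) ^ β :=
        sum_congr rfl fun idx _ =>
          (mul_rpow_mul_mul_rpow_mul (hF idx) (hG idx) (hX idx) hαβ).symm
    _ ≤ tform F x ^ α * tform G x ^ β :=
        sum_rpow_mul_rpow_le_s14 _ (fun idx _ => mul_nonneg (hF idx) (hX idx))
          (fun idx _ => mul_nonneg (hG idx) (hX idx)) hα hβ hαβ

theorem tform_le_sum {T : ((i : Fin d) → Fin (m i)) → ℝ} (hT : ∀ idx, 0 ≤ T idx)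
    {x : (i : Fin d) → Fin (m i) → ℝ} (hx : ∀ i j, 0 ≤ x i j)
    (hx_norm : ∀ i, ∑ j, x i j ^ 2 = 1) :
    tform T x ≤ ∑ idx, T idx :=
  sum_le_sum fun idx _ => mul_le_of_le_one_right (hT idx)
    (prod_le_one (fun i _ => hx i (idx i)) fun i _ => le_one_of_sum_sq_eq_one (hx_norm i) (idx i))

theorem tform_le_specNorm {T : ((i : Fin d) → Fin (m i)) → ℝ} (hT : ∀ idx, 0 ≤ T idx)
    {x : (i : Fin d) → Fin (m i) → ℝ} (hx : ∀ i j, 0 ≤ x i j)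
    (hx_norm : ∀ i, ∑ j, x i j ^ 2 = 1) :
    tform T x ≤ specNorm T := by
  refine le_csSup ⟨∑ idx, T idx, ?_⟩ ⟨x, hx, hx_norm, rfl⟩
  rintro r ⟨y, hy, hy_norm, rfl⟩
  exact tform_le_sum hT hy hy_norm

theorem specNorm_nonneg {T : ((i : Fin d) → Fin (m i)) → ℝ} (hT : ∀ idx, 0 ≤ T idx) :
    0 ≤ specNorm T :=
  Real.sSup_nonneg fun _ ⟨_, hx, _, hr⟩ => hr ▸ tform_nonneg hT hx

end Tensor

theorem spectral_norm_log_convex_general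
    (d : ℕ) (m : Fin d → ℕ)
    (F G : ((i : Fin d) → Fin (m i)) → ℝ)
    (hF : ∀ idx, 0 ≤ F idx) (hG : ∀ idx, 0 ≤ G idx)
    (α β : ℝ) (hα : 0 < α) (hβ : 0 < β) (hαβ : α + β = 1) :
    specNorm (fun idx => F idx ^ α * G idx ^ β) ≤
      specNorm F ^ α * specNorm G ^ β := by
  refine Real.sSup_le ?_
    (mul_nonneg (rpow_nonneg (specNorm_nonneg hF) α) (rpow_nonneg (specNorm_nonneg hG) β))
  rintro r ⟨x, hx, hx_norm, rfl⟩
  calc tform (fun idx => F idx ^ α * G idx ^ β) x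
      ≤ tform F x ^ α * tform G x ^ β := tform_rpow_mul_rpow_le hF hG hx hα hβ hαβ
    _ ≤ specNorm F ^ α * specNorm G ^ β :=
        mul_le_mul
          (rpow_le_rpow (tform_nonneg hF hx) (tform_le_specNorm hF hx hx_norm) hα.le)
          (rpow_le_rpow (tform_nonneg hG hx) (tform_le_specNorm hG hx hx_norm) hβ.le)
          (rpow_nonneg (tform_nonneg hG hx) β) (rpow_nonneg (specNorm_nonneg hF) α)

/-- For nonnegative tensors `F, G` and `α, β > 0` with `α + β = 1`,
`‖F^{∘α} ∘ G^{∘β}‖_∞ ≤ ‖F‖_∞^α · ‖G‖_∞^β`. -/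
theorem spectral_norm_log_convex
    (d : ℕ) (m : Fin d → ℕ) (hm : ∀ i, 0 < m i)
    (F G : ((i : Fin d) → Fin (m i)) → ℝ)
    (hF : ∀ idx, 0 ≤ F idx) (hG : ∀ idx, 0 ≤ G idx)
    (α β : ℝ) (hα : 0 < α) (hβ : 0 < β) (hαβ : α + β = 1) :
    specNorm (fun idx => F idx ^ α * G idx ^ β) ≤
      specNorm F ^ α * specNorm G ^ β :=
  spectral_norm_log_convex_general d m F G hF hG α β hα hβ hαβ
end

section
/- Let T ∈ R_+^{m1×⋯×md} be a nonnegative tensor and M = m1⋯md. Then for every s > 0, ‖T‖_{ℓ∞} ≤ ‖T^{∘s}‖_∞^{1/s} ≤ M^{1/(2s)} ‖T‖_{ℓ∞}, and consequently lim_{s→∞} ‖T^{∘s}‖_∞^{1/s} = ‖T‖_{ℓ∞} = max_{i1,…,id} t_{i1,…,id}. -/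
open Filter

/-- The maximal entry (`ℓ∞` norm) of a nonnegative tensor. -/
noncomputable def linfNorm {d : ℕ} {m : Fin d → ℕ}
    (T : ((i : Fin d) → Fin (m i)) → ℝ) : ℝ :=
  ⨆ idx : (i : Fin d) → Fin (m i), T idx

section aux

variable {d : ℕ} {m : Fin d → ℕ}

lemma tform_le {S : ((i : Fin d) → Fin (m i)) → ℝ}
    {L : ℝ} (hL0 : 0 ≤ L) (hL : ∀ idx, S idx ≤ L)
    {x : (i : Fin d) → Fin (m i) → ℝ} (hx : ∀ i j, 0 ≤ x i j)
    (hx2 : ∀ i, ∑ j, (x i j) ^ 2 = 1) :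
    tform S x ≤ (∏ i, Real.sqrt (m i)) * L := by
  have hxprod : ∀ idx : (i : Fin d) → Fin (m i), 0 ≤ ∏ i, x i (idx i) :=
    fun idx => Finset.prod_nonneg fun i _ => hx i (idx i)
  have h1 : tform S x ≤ ∑ idx : (i : Fin d) → Fin (m i), L * ∏ i, x i (idx i) := by
    apply Finset.sum_le_sum
    intro idx _
    exact mul_le_mul_of_nonneg_right (hL idx) (hxprod idx)
  have h2 : ∑ idx : (i : Fin d) → Fin (m i), L * ∏ i, x i (idx i)
      = L * ∏ i, ∑ j, x i j := by
    rw [← Finset.mul_sum, Fintype.prod_sum]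
  have h3 : ∀ i, ∑ j, x i j ≤ Real.sqrt (m i) := by
    intro i
    rw [show ((m i : ℝ)) = (Finset.univ : Finset (Fin (m i))).card * ∑ j, (x i j) ^ 2 by
      rw [hx2 i]; simp]
    exact Real.le_sqrt_of_sq_le sq_sum_le_card_mul_sum_sq
  have hsum_nonneg : ∀ i, (0:ℝ) ≤ ∑ j, x i j :=
    fun i => Finset.sum_nonneg fun j _ => hx i j
  have h4 : ∏ i, ∑ j, x i j ≤ ∏ i, Real.sqrt (m i) :=
    Finset.prod_le_prod (fun i _ => hsum_nonneg i) (fun i _ => h3 i)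
  calc tform S x ≤ L * ∏ i, ∑ j, x i j := h2 ▸ h1
    _ ≤ L * ∏ i, Real.sqrt (m i) := mul_le_mul_of_nonneg_left h4 hL0
    _ = (∏ i, Real.sqrt (m i)) * L := mul_comm _ _

lemma tform_indicator (S : ((i : Fin d) → Fin (m i)) → ℝ)
    (idx₀ : (i : Fin d) → Fin (m i)) :
    tform S (fun i j => if j = idx₀ i then 1 else 0) = S idx₀ := by
  unfold tform
  rw [Finset.sum_eq_single idx₀]
  · simp
  · intro idx _ hne
    obtain ⟨i, hi⟩ := Function.ne_iff.mp hne
    rw [Finset.prod_eq_zero (Finset.mem_univ i) (by simp [hi]), mul_zero]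
  · intro h; exact absurd (Finset.mem_univ _) h

lemma specNorm_bounds (hm : ∀ i, 0 < m i)
    (S : ((i : Fin d) → Fin (m i)) → ℝ) (hS : ∀ idx, 0 ≤ S idx) :
    linfNorm S ≤ specNorm S ∧ specNorm S ≤ (∏ i, Real.sqrt (m i)) * linfNorm S := by
  haveI : ∀ i, Nonempty (Fin (m i)) := fun i => ⟨⟨0, hm i⟩⟩
  haveI : Nonempty ((i : Fin d) → Fin (m i)) := ⟨fun i => Classical.arbitrary _⟩
  have hL : ∀ idx, S idx ≤ linfNorm S :=
    fun idx => le_ciSup (Set.Finite.bddAbove (Set.finite_range S)) idx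
  obtain ⟨idx₀, hidx₀⟩ := exists_eq_ciSup_of_finite (f := S)
  set P := {r | ∃ x : (i : Fin d) → Fin (m i) → ℝ,
    (∀ i j, 0 ≤ x i j) ∧ (∀ i, ∑ j, (x i j) ^ 2 = 1) ∧ r = tform S x} with hP
  have hmem : S idx₀ ∈ P := by
    refine ⟨fun i j => if j = idx₀ i then 1 else 0, fun i j => by positivity, fun i => by
      simp [apply_ite (· ^ (2:ℕ))], (tform_indicator S idx₀).symm⟩
  have hub : ∀ r ∈ P, r ≤ (∏ i, Real.sqrt (m i)) * linfNorm S := by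
    rintro r ⟨x, hx, hx2, rfl⟩
    exact tform_le (le_trans (hS idx₀) (hL idx₀)) hL hx hx2
  constructor
  · calc linfNorm S = S idx₀ := hidx₀.symm ▸ rfl
      _ ≤ sSup P := le_csSup ⟨_, hub⟩ hmem
  · exact csSup_le ⟨_, hmem⟩ hub

end aux

/-- For `M = m₁⋯m_d` and every `s > 0`,
`‖T‖_{ℓ∞} ≤ ‖T^{∘s}‖_∞^{1/s} ≤ M^{1/(2s)} ‖T‖_{ℓ∞}`, and consequently
`lim_{s→∞} ‖T^{∘s}‖_∞^{1/s} = ‖T‖_{ℓ∞}`. -/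
theorem spectral_norm_power_limit
    (d : ℕ) (m : Fin d → ℕ) (hm : ∀ i, 0 < m i)
    (T : ((i : Fin d) → Fin (m i)) → ℝ) (hT : ∀ idx, 0 ≤ T idx) :
    (∀ s : ℝ, 0 < s →
      linfNorm T ≤ specNorm (fun idx => T idx ^ s) ^ (1 / s) ∧
      specNorm (fun idx => T idx ^ s) ^ (1 / s) ≤
        (∏ i, (m i : ℝ)) ^ (1 / (2 * s)) * linfNorm T) ∧
    Tendsto (fun s : ℝ => specNorm (fun idx => T idx ^ s) ^ (1 / s)) atTop
      (nhds (linfNorm T)) := by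
  haveI : ∀ i, Nonempty (Fin (m i)) := fun i => ⟨⟨0, hm i⟩⟩
  haveI : Nonempty ((i : Fin d) → Fin (m i)) := ⟨fun i => Classical.arbitrary _⟩
  have hL : ∀ idx, T idx ≤ linfNorm T :=
    fun idx => le_ciSup (Set.Finite.bddAbove (Set.finite_range T)) idx
  obtain ⟨idx₀, hidx₀⟩ := exists_eq_ciSup_of_finite (f := T)
  have hLnn : 0 ≤ linfNorm T := le_trans (hT idx₀) (hL idx₀)
  have hMpos : (0:ℝ) < ∏ i, (m i : ℝ) :=
    Finset.prod_pos (fun i _ => by exact_mod_cast hm i)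
  have hsqrt_nn : (0:ℝ) ≤ ∏ i, Real.sqrt (m i) :=
    Finset.prod_nonneg fun i _ => Real.sqrt_nonneg _
  have hsqrt_eq : (∏ i, Real.sqrt (m i)) = (∏ i, (m i:ℝ)) ^ ((1:ℝ)/2) := by
    rw [← Real.finset_prod_rpow _ _ (fun i _ => by positivity) _]
    exact Finset.prod_congr rfl fun i _ => Real.sqrt_eq_rpow _
  have hlinf_pow : ∀ s : ℝ, 0 < s →
      linfNorm (fun idx => T idx ^ s) = linfNorm T ^ s := by
    intro s hs
    apply le_antisymm
    · exact ciSup_le fun idx => Real.rpow_le_rpow (hT idx) (hL idx) hs.le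
    · calc linfNorm T ^ s = T idx₀ ^ s := by unfold linfNorm; rw [← hidx₀]
        _ ≤ _ := le_ciSup (Set.Finite.bddAbove
          (Set.finite_range (fun idx => T idx ^ s))) idx₀
  have key : ∀ s : ℝ, 0 < s →
      linfNorm T ≤ specNorm (fun idx => T idx ^ s) ^ (1/s) ∧
      specNorm (fun idx => T idx ^ s) ^ (1/s) ≤
        (∏ i, (m i:ℝ)) ^ (1/(2*s)) * linfNorm T := by
    intro s hs
    obtain ⟨hlo, hhi⟩ := specNorm_bounds hm (fun idx => T idx ^ s)
      (fun idx => Real.rpow_nonneg (hT idx) s)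
    rw [hlinf_pow s hs] at hlo hhi
    have hspec_nn : 0 ≤ specNorm (fun idx => T idx ^ s) :=
      le_trans (Real.rpow_nonneg hLnn s) hlo
    constructor
    · have h1 := Real.rpow_le_rpow (Real.rpow_nonneg hLnn s) hlo
        (by positivity : (0:ℝ) ≤ 1/s)
      rwa [← Real.rpow_mul hLnn, mul_one_div_cancel hs.ne', Real.rpow_one] at h1
    · have h2 := Real.rpow_le_rpow hspec_nn hhi (by positivity : (0:ℝ) ≤ 1/s)
      rw [Real.mul_rpow hsqrt_nn (Real.rpow_nonneg hLnn s), ← Real.rpow_mul hLnn,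
        mul_one_div_cancel hs.ne', Real.rpow_one, hsqrt_eq,
        ← Real.rpow_mul hMpos.le] at h2
      have harith : (1:ℝ)/2 * (1/s) = 1/(2*s) := by
        field_simp
      rwa [harith] at h2
  refine ⟨key, ?_⟩
  have h0 : Tendsto (fun s : ℝ => 1/(2*s)) atTop (nhds 0) := by
    simp only [one_div]
    exact tendsto_inv_atTop_zero.comp
      (tendsto_id.const_mul_atTop (by norm_num : (0:ℝ) < 2))
  have h1 : Tendsto (fun s : ℝ => (∏ i, (m i:ℝ)) ^ (1/(2*s))) atTop (nhds 1) := by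
    have hc := (Real.continuousAt_const_rpow (a := ∏ i, (m i:ℝ)) (b := 0)
      hMpos.ne').tendsto
    rw [Real.rpow_zero] at hc
    exact hc.comp h0
  have h2 : Tendsto (fun s : ℝ => (∏ i, (m i:ℝ)) ^ (1/(2*s)) * linfNorm T) atTop
      (nhds (linfNorm T)) := by
    simpa using h1.mul_const (linfNorm T)
  refine tendsto_of_tendsto_of_tendsto_of_le_of_le' tendsto_const_nhds h2 ?_ ?_
  · filter_upwards [eventually_gt_atTop 0] with s hs
    exact (key s hs).1
  · filter_upwards [eventually_gt_atTop 0] with s hs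
    exact (key s hs).2
end
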